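/- Assume E(Y) = 0, Var(Y) = V ≠ 0, fix y > 0 with S^{u}_{Cl} + y − 1 ≥ 0, and for an i.i.d. sample (Y_i, Y_i^u), 1 ≤ i ≤ N, set K_i⁺ = Y_i Y_i^u − (S^{u}_{Cl} + y)(Y_i² + (Y_i^u)²)/2 and Z_i = (Y_i + Y_i^u)/2. Then P(T^{u}_{N,Cl} ≥ S^{u}_{Cl} + y) ≤ P(Σ_{i=1}^N (K_i⁺ − E(K⁺)) ≥ N yV/2) + P(Σ_{i=1}^N Z_i ≥ N √(yV/(2(S^{u}_{Cl}+y−1)))) + P(Σ_{i=1}^N (−Z_i) ≥ N √(yV/(2(S^{u}_{Cl}+y−1)))). -/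

import Mathlib

open MeasureTheory ProbabilityTheory Filter Finset
open scoped NNReal ENNReal Topology

/-!
Write `m = (2N)⁻¹ Σ (Y_i + Y_i^u)` for the pooled sample mean and `D` for the pooled empirical
variance, the denominator of `T`. By Cauchy–Schwarz `D ≥ 0`, so `T ≥ c := S + y ≥ 1` forces
`D > 0`, and clearing it gives `Σ K_i⁺ ≥ -N (c - 1) m²`. Since `E Y = 0`, `E Y² = E (Y^u)² = V`
and `E[Y Y^u] = S V`, we have `E K⁺ = -y V`. Hence either `(c - 1) m² ≤ y V / 2`, which is the first
event, or `|m| > √(y V / (2 (c - 1)))`, which is one of the other two, as `Σ Z_i = N m`.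
-/

noncomputable section

namespace SobolPaper

variable {p : ℕ} {𝒳 : Fin p → Type*} [∀ i, MeasurableSpace (𝒳 i)]

/-- The pick-freeze probability space: two independent copies of the input vector
`X = (X₁,…,X_p)` (with independent coordinates) are modeled canonically as the two
canonical projections of the product of two copies of the product measure. -/
def pfMeasure (ν : ∀ i, Measure (𝒳 i)) : Measure ((∀ i, 𝒳 i) × (∀ i, 𝒳 i)) :=
  (Measure.pi ν).prod (Measure.pi ν)

instance (ν : ∀ i, Measure (𝒳 i)) [∀ i, IsProbabilityMeasure (ν i)] :
    IsProbabilityMeasure (pfMeasure ν) := by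
  unfold pfMeasure; infer_instance

/-- The output `Y = f(X)`. -/
def Yout (f : (∀ i, 𝒳 i) → ℝ) (ω : (∀ i, 𝒳 i) × (∀ i, 𝒳 i)) : ℝ := f ω.1

/-- The pick-freeze input `X^u`: coordinates in `u` are frozen (taken from `X`),
the others are resampled (taken from the independent copy `X'`). -/
def Xpf (u : Finset (Fin p)) (ω : (∀ i, 𝒳 i) × (∀ i, 𝒳 i)) : ∀ i, 𝒳 i :=
  fun i => if i ∈ u then ω.1 i else ω.2 i

/-- The pick-freeze replication `Y^u = f(X^u)`. -/
def Ypf (f : (∀ i, 𝒳 i) → ℝ) (u : Finset (Fin p)) (ω : (∀ i, 𝒳 i) × (∀ i, 𝒳 i)) : ℝ :=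
  f (Xpf u ω)

/-- Covariance of two real random variables. -/
def cov {α : Type*} [MeasurableSpace α] (μ : Measure α) (g h : α → ℝ) : ℝ :=
  ∫ a, g a * h a ∂μ - (∫ a, g a ∂μ) * ∫ a, h a ∂μ

/-- The closed Sobol index `S^u_Cl = Cov(Y, Y^u) / Var(Y)`. -/
def SCl (ν : ∀ i, Measure (𝒳 i)) (f : (∀ i, 𝒳 i) → ℝ) (u : Finset (Fin p)) : ℝ :=
  cov (pfMeasure ν) (Yout f) (Ypf f u) / variance (Yout f) (pfMeasure ν)

/-- First pick-freeze estimator `S^u_{N,Cl}` (case `k = 1`) built from a sample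
`W i ω = (Y_i(ω), Y_i^u(ω))`. -/
def SN1 {Ω' : Type*} (W : ℕ → Ω' → ℝ × ℝ) (N : ℕ) (ω : Ω') : ℝ :=
  ((∑ i ∈ Finset.range N, (W i ω).1 * (W i ω).2) / N -
      ((∑ i ∈ Finset.range N, (W i ω).1) / N) * ((∑ i ∈ Finset.range N, (W i ω).2) / N)) /
    ((∑ i ∈ Finset.range N, (W i ω).1 ^ 2) / N - ((∑ i ∈ Finset.range N, (W i ω).1) / N) ^ 2)

/-- Second pick-freeze estimator `T^u_{N,Cl}` (case `k = 1`) built from a sample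
`W i ω = (Y_i(ω), Y_i^u(ω))`. -/
def TN1 {Ω' : Type*} (W : ℕ → Ω' → ℝ × ℝ) (N : ℕ) (ω : Ω') : ℝ :=
  ((∑ i ∈ Finset.range N, (W i ω).1 * (W i ω).2) / N -
      ((∑ i ∈ Finset.range N, ((W i ω).1 + (W i ω).2)) / (2 * N)) ^ 2) /
    ((∑ i ∈ Finset.range N, ((W i ω).1 ^ 2 + (W i ω).2 ^ 2)) / (2 * N) -
      ((∑ i ∈ Finset.range N, ((W i ω).1 + (W i ω).2)) / (2 * N)) ^ 2)

section Estimator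

lemma sq_sum_add_le_two_mul_card_mul_sum_sq {ι : Type*} (s : Finset ι) (a b : ι → ℝ) :
    (∑ i ∈ s, (a i + b i)) ^ 2 ≤ 2 * #s * ∑ i ∈ s, (a i ^ 2 + b i ^ 2) := by
  have hpair : ∑ i ∈ s, (a i + b i) ^ 2 ≤ 2 * ∑ i ∈ s, (a i ^ 2 + b i ^ 2) := by
    rw [mul_sum]
    exact sum_le_sum fun i _ => by nlinarith [sq_nonneg (a i - b i)]
  calc (∑ i ∈ s, (a i + b i)) ^ 2 ≤ #s * ∑ i ∈ s, (a i + b i) ^ 2 := sq_sum_le_card_mul_sum_sq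
    _ ≤ #s * (2 * ∑ i ∈ s, (a i ^ 2 + b i ^ 2)) := by gcongr
    _ = 2 * #s * ∑ i ∈ s, (a i ^ 2 + b i ^ 2) := by ring

/-- The denominator of `TN1` is the empirical variance of the pooled sample `Y₁, Y₁^u, …`. -/
lemma pooled_variance_nonneg (N : ℕ) (a b : ℕ → ℝ) :
    0 ≤ (∑ i ∈ range N, (a i ^ 2 + b i ^ 2)) / (2 * N) -
      ((∑ i ∈ range N, (a i + b i)) / (2 * N)) ^ 2 := by
  rcases N.eq_zero_or_pos with rfl | hN
  · simp
  have hCS := sq_sum_add_le_two_mul_card_mul_sum_sq (range N) a b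
  rw [card_range] at hCS
  rw [sub_nonneg, div_pow, div_le_div_iff₀ (by positivity) (by positivity)]
  have hN' : (0 : ℝ) < N := by exact_mod_cast hN
  nlinarith

variable {Ω' : Type*} (W : ℕ → Ω' → ℝ × ℝ) (ω : Ω')

lemma TN1_zero : TN1 W 0 ω = 0 := by
  simp [TN1]

lemma pos_of_le_TN1 {N : ℕ} {c : ℝ} (hc : 0 < c) (h : c ≤ TN1 W N ω) : 0 < N := by
  refine Nat.pos_of_ne_zero ?_
  rintro rfl
  rw [TN1_zero] at h
  linarith

/-- Clearing the (positive) pooled variance from `c ≤ TN1` leaves the sum of the kernels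
`K_i = Y_i Y_i^u - c (Y_i² + (Y_i^u)²) / 2` bounded below by the squared pooled mean. -/
lemma neg_mul_sq_mean_le_sum_of_le_TN1 {N : ℕ} {c : ℝ} (hc : 0 < c) (h : c ≤ TN1 W N ω) :
    -(N * ((c - 1) * ((∑ i ∈ range N, ((W i ω).1 + (W i ω).2)) / (2 * N)) ^ 2)) ≤
      ∑ i ∈ range N, ((W i ω).1 * (W i ω).2 - c * ((W i ω).1 ^ 2 + (W i ω).2 ^ 2) / 2) := by
  have hN : (0 : ℝ) < N := by exact_mod_cast pos_of_le_TN1 W ω hc h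
  have hD0 := pooled_variance_nonneg N (fun i => (W i ω).1) (fun i => (W i ω).2)
  unfold TN1 at h
  set A := ∑ i ∈ range N, (W i ω).1 * (W i ω).2
  set B := ∑ i ∈ range N, ((W i ω).1 ^ 2 + (W i ω).2 ^ 2)
  set m := (∑ i ∈ range N, ((W i ω).1 + (W i ω).2)) / (2 * N)
  have hD : 0 < B / (2 * N) - m ^ 2 := hD0.lt_of_ne <| by
    rintro hD
    rw [← hD, div_zero] at h
    linarith
  have hkey : c * (B / (2 * N) - m ^ 2) ≤ A / N - m ^ 2 := (le_div_iff₀ hD).mp h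
  have hsum : ∑ i ∈ range N, ((W i ω).1 * (W i ω).2 - c * ((W i ω).1 ^ 2 + (W i ω).2 ^ 2) / 2)
      = A - c * B / 2 := by
    rw [sum_sub_distrib, ← sum_div, ← mul_sum]
  have hA : A = N * (A / N) := by field_simp
  have hB : B = 2 * N * (B / (2 * N)) := by field_simp
  rw [hsum, hA, hB]
  nlinarith

lemma neg_mul_le_or_sqrt_lt_abs {n κ d k m : ℝ} (hn : 0 ≤ n) (hκ : 0 ≤ κ) (hd : 0 ≤ d)
    (h : -(n * (κ * m ^ 2)) ≤ k) : -(n * d) ≤ k ∨ Real.sqrt (d / κ) < |m| := by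
  rcases le_or_gt (κ * m ^ 2) d with hm | hm
  · left
    nlinarith [mul_le_mul_of_nonneg_left hm hn]
  · right
    have hκ' : 0 < κ := hκ.lt_of_ne <| by rintro rfl; linarith
    rw [← Real.sqrt_sq_eq_abs]
    exact Real.sqrt_lt_sqrt (by positivity) ((div_lt_iff₀ hκ').mpr (by linarith))

/-- `δ` stands for `y V`; the first alternative is the event on `K_i⁺ - E K⁺` since `E K⁺ = -y V`. -/
lemma deviation_events_of_le_TN1 {N : ℕ} {c δ : ℝ} (hc : 1 ≤ c) (hδ : 0 ≤ δ)
    (h : c ≤ TN1 W N ω) :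
    N * (δ / 2) ≤ ∑ i ∈ range N,
        ((W i ω).1 * (W i ω).2 - c * ((W i ω).1 ^ 2 + (W i ω).2 ^ 2) / 2 + δ) ∨
      N * Real.sqrt (δ / (2 * (c - 1))) ≤ ∑ i ∈ range N, ((W i ω).1 + (W i ω).2) / 2 ∨
      N * Real.sqrt (δ / (2 * (c - 1))) ≤ ∑ i ∈ range N, -(((W i ω).1 + (W i ω).2) / 2) := by
  have hkey := neg_mul_sq_mean_le_sum_of_le_TN1 W ω (by linarith) h
  have hN : (0 : ℝ) < N := by exact_mod_cast pos_of_le_TN1 W ω (by linarith) h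
  have hmean : ∑ i ∈ range N, ((W i ω).1 + (W i ω).2) / 2 =
      N * ((∑ i ∈ range N, ((W i ω).1 + (W i ω).2)) / (2 * N)) := by
    rw [← sum_div]; field_simp
  rcases neg_mul_le_or_sqrt_lt_abs hN.le (by linarith) (by positivity : 0 ≤ δ / 2) hkey
    with hK | hZ
  · left
    rw [sum_add_distrib, sum_const, card_range, nsmul_eq_mul]
    linarith
  · right
    rw [div_div, lt_abs] at hZ
    rw [sum_neg_distrib, hmean]
    rcases hZ with hZ | hZ
    · exact Or.inl (by gcongr)
    · exact Or.inr (by rw [← mul_neg]; gcongr)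

end Estimator

section PickFreeze

variable {p : ℕ} {𝒳 : Fin p → Type*} [∀ i, MeasurableSpace (𝒳 i)]
  (ν : ∀ i, Measure (𝒳 i)) [∀ i, IsProbabilityMeasure (ν i)]

lemma measurable_Xpf (u : Finset (Fin p)) : Measurable (Xpf (𝒳 := 𝒳) u) := by
  refine measurable_pi_lambda _ fun i => ?_
  by_cases hi : i ∈ u
  · simp only [Xpf, hi, ↓reduceIte]; exact (measurable_pi_apply i).comp measurable_fst
  · simp only [Xpf, hi, ↓reduceIte]; exact (measurable_pi_apply i).comp measurable_snd

lemma map_Xpf_pfMeasure (u : Finset (Fin p)) : (pfMeasure ν).map (Xpf u) = Measure.pi ν := by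
  refine (Measure.pi_eq fun s hs => ?_).symm
  rw [Measure.map_apply (measurable_Xpf u) (MeasurableSet.univ_pi hs)]
  have hpre : Xpf u ⁻¹' Set.pi Set.univ s =
      (Set.pi Set.univ fun i => if i ∈ u then s i else Set.univ) ×ˢ
      (Set.pi Set.univ fun i => if i ∈ u then Set.univ else s i) := by
    ext ⟨x, x'⟩
    simp only [Set.mem_preimage, Set.mem_pi, Set.mem_univ, true_implies, Set.mem_prod, Xpf]
    rw [← forall_and]
    exact forall_congr' fun i => by by_cases hi : i ∈ u <;> simp [hi]
  rw [hpre, pfMeasure, Measure.prod_prod, Measure.pi_pi, Measure.pi_pi, ← prod_mul_distrib]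
  exact prod_congr rfl fun i _ => by by_cases hi : i ∈ u <;> simp [hi]

lemma identDistrib_Ypf_Yout {f : (∀ i, 𝒳 i) → ℝ} (hf : Measurable f) (u : Finset (Fin p)) :
    IdentDistrib (Ypf f u) (Yout f) (pfMeasure ν) (pfMeasure ν) where
  aemeasurable_fst := (hf.comp (measurable_Xpf u)).aemeasurable
  aemeasurable_snd := (hf.comp measurable_fst).aemeasurable
  map_eq := by
    have hfst : (pfMeasure ν).map Prod.fst = Measure.pi ν := by simp [pfMeasure]
    change (pfMeasure ν).map (f ∘ Xpf u) = (pfMeasure ν).map (f ∘ Prod.fst)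
    rw [← Measure.map_map hf (measurable_Xpf u), ← Measure.map_map hf measurable_fst,
      map_Xpf_pfMeasure, hfst]

/-- `Y^u` has the law of `Y`, and `E[Y Y^u] = Cov(Y, Y^u)` because `E Y = 0`. -/
lemma integral_pickFreeze_kernel {f : (∀ i, 𝒳 i) → ℝ} (hf : Measurable f)
    (hY2 : MemLp (Yout f) 2 (pfMeasure ν)) (hVar : variance (Yout f) (pfMeasure ν) ≠ 0)
    (hcent : ∫ ω, Yout f ω ∂(pfMeasure ν) = 0) (u : Finset (Fin p)) (c : ℝ) :
    ∫ ω, (Yout f ω * Ypf f u ω - c * (Yout f ω ^ 2 + Ypf f u ω ^ 2) / 2) ∂(pfMeasure ν) =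
      (SCl ν f u - c) * variance (Yout f) (pfMeasure ν) := by
  have hident := identDistrib_Ypf_Yout ν hf u
  have hYu2 : MemLp (Ypf f u) 2 (pfMeasure ν) := hident.memLp_iff.mpr hY2
  have hsq : ∫ ω, Ypf f u ω ^ 2 ∂(pfMeasure ν) = ∫ ω, Yout f ω ^ 2 ∂(pfMeasure ν) :=
    (hident.comp (measurable_id.pow_const 2)).integral_eq
  have hvar : ∫ ω, Yout f ω ^ 2 ∂(pfMeasure ν) = variance (Yout f) (pfMeasure ν) := by
    rw [variance_eq_integral hY2.aemeasurable, hcent]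
    simp
  have hcov : ∫ ω, Yout f ω * Ypf f u ω ∂(pfMeasure ν) =
      SCl ν f u * variance (Yout f) (pfMeasure ν) := by
    rw [SCl, div_mul_cancel₀ _ hVar, cov, hcent, zero_mul, sub_zero]
  have hprod : Integrable (fun ω => Yout f ω * Ypf f u ω) (pfMeasure ν) :=
    hY2.integrable_mul hYu2
  have hsum : Integrable (fun ω => c * (Yout f ω ^ 2 + Ypf f u ω ^ 2) / 2) (pfMeasure ν) :=
    ((hY2.integrable_sq.add hYu2.integrable_sq).const_mul c).div_const 2
  rw [integral_sub hprod hsum, integral_div, integral_const_mul,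
    integral_add hY2.integrable_sq hYu2.integrable_sq, hsq, hvar, hcov]
  ring

end PickFreeze

theorem statement13_general
    {p : ℕ} {𝒳 : Fin p → Type*} [∀ i, MeasurableSpace (𝒳 i)]
    (ν : ∀ i, Measure (𝒳 i)) [∀ i, IsProbabilityMeasure (ν i)]
    (f : (∀ i, 𝒳 i) → ℝ) (hf : Measurable f)
    (hY2 : MemLp (Yout f) 2 (pfMeasure ν))
    (hVar : variance (Yout f) (pfMeasure ν) ≠ 0)
    (u : Finset (Fin p))
    {Ω' : Type*} [MeasurableSpace Ω'] (P : Measure Ω') [IsProbabilityMeasure P]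
    (W : ℕ → Ω' → ℝ × ℝ)
    (y : ℝ) (hy : 0 < y)
    (hcent : ∫ ω, Yout f ω ∂(pfMeasure ν) = 0)
    (N : ℕ)
    (V S EK : ℝ)
    (hV : V = variance (Yout f) (pfMeasure ν))
    (hS : S = SCl ν f u)
    (hSy : 0 ≤ S + y - 1)
    (hEK : EK = ∫ ω, (Yout f ω * Ypf f u ω -
      (S + y) * (Yout f ω ^ 2 + Ypf f u ω ^ 2) / 2) ∂(pfMeasure ν)) :
    (P {ω' | S + y ≤ TN1 W N ω'}).toReal ≤
      (P {ω' | N * (y * V / 2) ≤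
          ∑ i ∈ Finset.range N,
            ((W i ω').1 * (W i ω').2 -
              (S + y) * ((W i ω').1 ^ 2 + (W i ω').2 ^ 2) / 2 - EK)}).toReal
      + (P {ω' | N * Real.sqrt (y * V / (2 * (S + y - 1))) ≤
          ∑ i ∈ Finset.range N, ((W i ω').1 + (W i ω').2) / 2}).toReal
      + (P {ω' | N * Real.sqrt (y * V / (2 * (S + y - 1))) ≤
          ∑ i ∈ Finset.range N, -(((W i ω').1 + (W i ω').2) / 2)}).toReal := by
  have hEKval : EK = -(y * V) := by
    rw [hEK, integral_pickFreeze_kernel ν hf hY2 hVar hcent, ← hS, ← hV]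
    ring
  have hyV : 0 ≤ y * V := mul_nonneg hy.le (hV ▸ variance_nonneg _ _)
  simp only [← measureReal_def]
  refine (measureReal_mono (fun ω' hω' => ?_)).trans
    ((measureReal_union_le _ _).trans (add_le_add_left (measureReal_union_le _ _) _))
  simp only [Set.mem_union, Set.mem_ofPred_eq, hEKval, sub_neg_eq_add, or_assoc]
  exact deviation_events_of_le_TN1 W ω' (by linarith) hyV hω'

/-- Decomposition of the upward deviation probability of `T^u_{N,Cl}`
into three elementary deviation probabilities. -/
theorem statement13
    {p : ℕ} {𝒳 : Fin p → Type*} [∀ i, MeasurableSpace (𝒳 i)]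
    (ν : ∀ i, Measure (𝒳 i)) [∀ i, IsProbabilityMeasure (ν i)]
    (f : (∀ i, 𝒳 i) → ℝ) (hf : Measurable f)
    (hY2 : MemLp (Yout f) 2 (pfMeasure ν))
    (hVar : variance (Yout f) (pfMeasure ν) ≠ 0)
    (u : Finset (Fin p))
    {Ω' : Type*} [MeasurableSpace Ω'] (P : Measure Ω') [IsProbabilityMeasure P]
    (W : ℕ → Ω' → ℝ × ℝ)
    (hindep : iIndepFun W P)
    (hident : ∀ i, IdentDistrib (W i) (fun ω => (Yout f ω, Ypf f u ω)) P (pfMeasure ν))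
    (y : ℝ) (hy : 0 < y)
    (hcent : ∫ ω, Yout f ω ∂(pfMeasure ν) = 0)
    (N : ℕ)
    (V S EK : ℝ)
    (hV : V = variance (Yout f) (pfMeasure ν))
    (hS : S = SCl ν f u)
    (hSy : 0 ≤ S + y - 1)
    (hEK : EK = ∫ ω, (Yout f ω * Ypf f u ω -
      (S + y) * (Yout f ω ^ 2 + Ypf f u ω ^ 2) / 2) ∂(pfMeasure ν)) :
    (P {ω' | S + y ≤ TN1 W N ω'}).toReal ≤
      (P {ω' | N * (y * V / 2) ≤
          ∑ i ∈ Finset.range N,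
            ((W i ω').1 * (W i ω').2 -
              (S + y) * ((W i ω').1 ^ 2 + (W i ω').2 ^ 2) / 2 - EK)}).toReal
      + (P {ω' | N * Real.sqrt (y * V / (2 * (S + y - 1))) ≤
          ∑ i ∈ Finset.range N, ((W i ω').1 + (W i ω').2) / 2}).toReal
      + (P {ω' | N * Real.sqrt (y * V / (2 * (S + y - 1))) ≤
          ∑ i ∈ Finset.range N, -(((W i ω').1 + (W i ω').2) / 2)}).toReal :=
  statement13_general ν f hf hY2 hVar u P W y hy hcent N V S EK hV hS hSy hEK

end SobolPaper
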